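/- arXiv:0901.0858 — 7 statements merged into one kernel-verified Lean document; each statement's English description precedes it below -/
import Mathlib

section
/- Let (H, w) be a weighted hereditary system, with H = (S, F). Then (H, w) is not greedy (i.e., not all maximal feasible sets have the same weight) if and only if there exist two maximal feasible sets S₁ and S₂ with w(S₁) ≠ w(S₂) such that for every a ∈ S₁ \ S₂ and every b ∈ S₂ \ S₁, the set (S₁ ∩ S₂) ∪ {a, b} is not feasible. -/
open SimpleGraph Set

variable {V : Type*} [Fintype V] [DecidableEq V]

/-- `N_i(S)`: vertices whose minimum distance to the set `S` equals `i`. -/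
def NSet (G : SimpleGraph V) (i : ℕ) (S : Set V) : Set V :=
  {u | (⨅ s ∈ S, G.edist s u) = (i : ℕ∞)}

/-- `N_i(x)`: vertices at distance exactly `i` from `x`. -/
def Nv (G : SimpleGraph V) (i : ℕ) (x : V) : Set V := {u | G.edist x u = (i : ℕ∞)}

/-- `S` is an independent set of `G`. -/
def IsIndep (G : SimpleGraph V) (S : Set V) : Prop :=
  S.Pairwise fun u v => ¬ G.Adj u v

/-- `A` dominates `T`. -/
def Dominates (G : SimpleGraph V) (A T : Set V) : Prop :=
  T ⊆ A ∪ {u | ∃ a ∈ A, G.Adj a u}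

/-- `S` is a maximal independent set of `G`. -/
def IsMaxIndep (G : SimpleGraph V) (S : Set V) : Prop :=
  IsIndep G S ∧ ∀ T, IsIndep G T → S ⊆ T → T = S

/-- The induced subgraph on `X ∪ Y` is complete bipartite with parts `X`, `Y`. -/
def IsCompBipartite (G : SimpleGraph V) (X Y : Set V) : Prop :=
  X.Nonempty ∧ Y.Nonempty ∧ Disjoint X Y ∧ IsIndep G X ∧ IsIndep G Y ∧
    ∀ x ∈ X, ∀ y ∈ Y, G.Adj x y

/-- `B = (X, Y)` is a generating subgraph of `G`. -/
def Generating (G : SimpleGraph V) (X Y : Set V) : Prop :=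
  IsCompBipartite G X Y ∧ ∃ S : Set V, IsIndep G S ∧ Disjoint S (X ∪ Y) ∧
    IsMaxIndep G (S ∪ X) ∧ IsMaxIndep G (S ∪ Y)

/-- `G` contains a (not necessarily induced) cycle on `k` vertices. -/
def HasCycle (G : SimpleGraph V) (k : ℕ) : Prop :=
  ∃ f : ZMod k → V, Function.Injective f ∧ ∀ i, G.Adj (f i) (f (i + 1))

/-- Weight of a set of vertices. -/
noncomputable def wt (w : V → ℝ) (S : Set V) : ℝ := ∑ x ∈ S.toFinite.toFinset, w x

/-- `G` is `w`-well-covered. -/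
def WWellCovered (G : SimpleGraph V) (w : V → ℝ) : Prop :=
  ∀ S T : Set V, IsMaxIndep G S → IsMaxIndep G T → wt w S = wt w T

/-!
Among all pairs of maximal feasible sets of different weight, take one whose intersection `I`
is as large as possible. If `I ∪ {a, b}` were feasible, extend it to a maximal feasible set `M`.
Then `M ∩ S₁ ⊇ I ∪ {a}` and `M ∩ S₂ ⊇ I ∪ {b}` are larger than `I`, so by the choice of the pair
`M` has both the weight of `S₁` and that of `S₂`, which differ.
-/

namespace Finset

variable {α β : Type*} [DecidableEq α] {F : Set (Finset α)}

lemma exists_maximal_pair_ne_inter_union_pair_notMem [Fintype α] (φ : Finset α → β)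
    {S₁ S₂ : Finset α} (h₁ : Maximal (· ∈ F) S₁) (h₂ : Maximal (· ∈ F) S₂)
    (hne : φ S₁ ≠ φ S₂) :
    ∃ T₁ T₂, Maximal (· ∈ F) T₁ ∧ Maximal (· ∈ F) T₂ ∧ φ T₁ ≠ φ T₂ ∧
      ∀ a ∈ T₁ \ T₂, ∀ b ∈ T₂ \ T₁, (T₁ ∩ T₂) ∪ {a, b} ∉ F := by
  let P : Set (Finset α × Finset α) :=
    {p | Maximal (· ∈ F) p.1 ∧ Maximal (· ∈ F) p.2 ∧ φ p.1 ≠ φ p.2}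
  obtain ⟨⟨T₁, T₂⟩, ⟨hT₁, hT₂, hTne⟩, hmax⟩ :=
    P.toFinite.exists_maximalFor (fun p => #(p.1 ∩ p.2)) P ⟨(S₁, S₂), h₁, h₂, hne⟩
  have hφ : ∀ U₁ U₂, Maximal (· ∈ F) U₁ → Maximal (· ∈ F) U₂ → T₁ ∩ T₂ ⊂ U₁ ∩ U₂ →
      φ U₁ = φ U₂ := fun U₁ U₂ hU₁ hU₂ hlt => by_contra fun hUne =>
    (card_lt_card hlt).not_ge (hmax (j := (U₁, U₂)) ⟨hU₁, hU₂, hUne⟩ (card_lt_card hlt).le)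
  refine ⟨T₁, T₂, hT₁, hT₂, hTne, fun a ha b hb habF => ?_⟩
  rw [mem_sdiff] at ha hb
  obtain ⟨M, hIM, hM⟩ := Finite.exists_le_maximal (p := (· ∈ F)) habF
  have hIM' : T₁ ∩ T₂ ⊆ M := subset_union_left.trans hIM
  have e₁ : φ T₁ = φ M := hφ T₁ M hT₁ hM <|
    (ssubset_iff_of_subset (subset_inter inter_subset_left hIM')).2
      ⟨a, mem_inter.2 ⟨ha.1, hIM (by simp)⟩, fun h => ha.2 (mem_inter.1 h).2⟩
  have e₂ : φ T₂ = φ M := hφ T₂ M hT₂ hM <|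
    (ssubset_iff_of_subset (subset_inter inter_subset_right hIM')).2
      ⟨b, mem_inter.2 ⟨hb.1, hIM (by simp)⟩, fun h => hb.2 (mem_inter.1 h).1⟩
  exact hTne (e₁.trans e₂.symm)

end Finset

theorem hereditary_not_greedy_iff_general {α : Type*} [Fintype α] [DecidableEq α]
    (F : Set (Finset α)) (w : α → ℝ) :
    (¬ ∀ S₁ ∈ F, ∀ S₂ ∈ F, (∀ g ∈ F, S₁ ⊆ g → g = S₁) → (∀ g ∈ F, S₂ ⊆ g → g = S₂) →
        ∑ x ∈ S₁, w x = ∑ x ∈ S₂, w x) ↔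
      ∃ S₁ ∈ F, ∃ S₂ ∈ F, (∀ g ∈ F, S₁ ⊆ g → g = S₁) ∧ (∀ g ∈ F, S₂ ⊆ g → g = S₂) ∧
        ∑ x ∈ S₁, w x ≠ ∑ x ∈ S₂, w x ∧
        ∀ a ∈ S₁ \ S₂, ∀ b ∈ S₂ \ S₁, (S₁ ∩ S₂) ∪ {a, b} ∉ F := by
  constructor
  · intro h
    push Not at h
    obtain ⟨A, hA, B, hB, hAmax, hBmax, hne⟩ := h
    obtain ⟨S₁, S₂, h₁, h₂, hS, hexchange⟩ :=
      Finset.exists_maximal_pair_ne_inter_union_pair_notMem (fun s => ∑ x ∈ s, w x)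
        (maximal_mem_iff.2 ⟨hA, fun g hg hAg => (hAmax g hg hAg).symm⟩)
        (maximal_mem_iff.2 ⟨hB, fun g hg hBg => (hBmax g hg hBg).symm⟩) hne
    exact ⟨S₁, h₁.prop, S₂, h₂.prop, fun _ hg => h₁.eq_of_ge hg, fun _ hg => h₂.eq_of_ge hg,
      hS, hexchange⟩
  · rintro ⟨S₁, h₁, S₂, h₂, hS₁max, hS₂max, hne, -⟩ h
    exact hne (h S₁ h₁ S₂ h₂ hS₁max hS₂max)

theorem hereditary_not_greedy_iff {α : Type*} [Fintype α] [DecidableEq α]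
    (F : Set (Finset α)) (hF : ∀ f ∈ F, ∀ f' ⊆ f, f' ∈ F) (w : α → ℝ) :
    (¬ ∀ S₁ ∈ F, ∀ S₂ ∈ F, (∀ g ∈ F, S₁ ⊆ g → g = S₁) → (∀ g ∈ F, S₂ ⊆ g → g = S₂) →
        ∑ x ∈ S₁, w x = ∑ x ∈ S₂, w x) ↔
      ∃ S₁ ∈ F, ∃ S₂ ∈ F, (∀ g ∈ F, S₁ ⊆ g → g = S₁) ∧ (∀ g ∈ F, S₂ ⊆ g → g = S₂) ∧
        ∑ x ∈ S₁, w x ≠ ∑ x ∈ S₂, w x ∧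
        ∀ a ∈ S₁ \ S₂, ∀ b ∈ S₂ \ S₁, (S₁ ∩ S₂) ∪ {a, b} ∉ F :=
  hereditary_not_greedy_iff_general F w
end

section
/- Let G be a graph with weight function w : V(G) → ℝ. Then G is not w-well-covered if and only if there exist two maximal independent sets S₁ and S₂ of G with w(S₁) ≠ w(S₂) such that the induced subgraph G[S₁ △ S₂] is complete bipartite. -/
open SimpleGraph Set

variable {V : Type*} [Fintype V] [DecidableEq V]

/-!
Among all pairs of maximal independent sets `M₁, M₂` with `w(M₁) ≠ w(M₂)`, take one with
`|M₁ ∩ M₂|` as large as possible. For `y ∈ M₂ \ M₁`, extend `y` together with its non-neighbours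
in `M₁` to a maximal independent set `N`. Then `N ∩ M₂ ⊋ M₁ ∩ M₂`, so by maximality
`w(N) = w(M₂) ≠ w(M₁)`; were some `x ∈ M₁ \ M₂` not adjacent to `y`, then also `M₁ ∩ N ⊋ M₁ ∩ M₂`,
a contradiction. Hence `M₁ \ M₂` and `M₂ \ M₁` span a complete bipartite graph.
-/

section

variable {G : SimpleGraph V}

omit [Fintype V] [DecidableEq V] in
lemma IsIndep.mono {S T : Set V} (hT : IsIndep G T) (hST : S ⊆ T) : IsIndep G S :=
  Set.Pairwise.mono hST hT

omit [Fintype V] [DecidableEq V] in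
lemma IsIndep.insert_nonadj {I : Set V} (hI : IsIndep G I) (y : V) :
    IsIndep G (insert y {x ∈ I | ¬ G.Adj y x}) := by
  have : Std.Symm fun u v : V => ¬ G.Adj u v := ⟨fun _ _ h hadj => h hadj.symm⟩
  rw [IsIndep, pairwise_insert_of_symm]
  exact ⟨hI.mono (sep_subset I _), fun _ hx _ => hx.2⟩

omit [DecidableEq V] in
lemma IsIndep.exists_isMaxIndep_superset {I : Set V} (hI : IsIndep G I) :
    ∃ M, I ⊆ M ∧ IsMaxIndep G M := by
  obtain ⟨M, ⟨hM, hIM⟩, hmax⟩ := Set.Finite.exists_maximalFor Set.ncard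
    {T : Set V | IsIndep G T ∧ I ⊆ T} (toFinite _) ⟨I, hI, subset_rfl⟩
  refine ⟨M, hIM, hM, fun T hT hMT => ?_⟩
  have hcard := hmax ⟨hT, hIM.trans hMT⟩ (ncard_le_ncard hMT)
  exact (eq_of_subset_of_ncard_le hMT hcard).symm

omit [Fintype V] [DecidableEq V] in
lemma IsMaxIndep.nonempty_sdiff {S T : Set V} (hS : IsMaxIndep G S) (hT : IsIndep G T)
    (hne : S ≠ T) : (S \ T).Nonempty :=
  nonempty_of_not_subset fun hST => hne (hS.2 T hT hST).symm

omit [Fintype V] [DecidableEq V] in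
lemma isCompBipartite_sdiff {S T : Set V} (hS : IsMaxIndep G S) (hT : IsMaxIndep G T)
    (hne : S ≠ T) (hadj : ∀ x ∈ S \ T, ∀ y ∈ T \ S, G.Adj x y) :
    IsCompBipartite G (S \ T) (T \ S) :=
  ⟨hS.nonempty_sdiff hT.1 hne, hT.nonempty_sdiff hS.1 hne.symm, disjoint_sdiff_sdiff,
    hS.1.mono sdiff_subset, hT.1.mono sdiff_subset, hadj⟩

variable {α : Type*} {f : Set V → α}

omit [DecidableEq V] in
lemma adj_of_ncard_inter_maximal {M₁ M₂ : Set V} (hM₁ : IsMaxIndep G M₁)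
    (hM₂ : IsMaxIndep G M₂) (hne : f M₁ ≠ f M₂)
    (hmax : ∀ N₁ N₂, IsMaxIndep G N₁ → IsMaxIndep G N₂ → f N₁ ≠ f N₂ →
      (N₁ ∩ N₂).ncard ≤ (M₁ ∩ M₂).ncard)
    {x y : V} (hx : x ∈ M₁ \ M₂) (hy : y ∈ M₂ \ M₁) : G.Adj x y := by
  obtain ⟨N, hsub, hN⟩ := (hM₁.1.insert_nonadj y).exists_isMaxIndep_superset
  have hcommon : M₁ ∩ M₂ ⊆ N := fun a ha =>
    hsub (mem_insert_of_mem _ ⟨ha.1, hM₂.1 hy.1 ha.2 (ne_of_mem_of_not_mem ha.1 hy.2).symm⟩)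
  have hNM₂ : f N = f M₂ := by
    by_contra h
    refine (hmax N M₂ hN hM₂ h).not_gt
      (ncard_lt_ncard ((ssubset_insert fun h => hy.2 h.1).trans_subset ?_))
    exact insert_subset ⟨hsub (mem_insert _ _), hy.1⟩ fun a ha => ⟨hcommon ha, ha.2⟩
  have hM₁N := hmax M₁ N hM₁ hN (hNM₂ ▸ hne)
  by_contra hxy
  refine hM₁N.not_gt (ncard_lt_ncard ((ssubset_insert fun h => hx.2 h.2).trans_subset ?_))
  have hxN : x ∈ N := hsub (mem_insert_of_mem _ ⟨hx.1, fun h => hxy h.symm⟩)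
  exact insert_subset ⟨hx.1, hxN⟩ fun a ha => ⟨ha.1, hcommon ha⟩

omit [DecidableEq V] in
lemma exists_isCompBipartite_sdiff_of_ne {S T : Set V} (hS : IsMaxIndep G S)
    (hT : IsMaxIndep G T) (hST : f S ≠ f T) :
    ∃ M₁ M₂, IsMaxIndep G M₁ ∧ IsMaxIndep G M₂ ∧ f M₁ ≠ f M₂ ∧
      IsCompBipartite G (M₁ \ M₂) (M₂ \ M₁) := by
  obtain ⟨⟨M₁, M₂⟩, ⟨hM₁, hM₂, hne⟩, hmax⟩ := Set.exists_max_image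
    {p : Set V × Set V | IsMaxIndep G p.1 ∧ IsMaxIndep G p.2 ∧ f p.1 ≠ f p.2}
    (fun p => (p.1 ∩ p.2).ncard) (toFinite _) ⟨(S, T), hS, hT, hST⟩
  refine ⟨M₁, M₂, hM₁, hM₂, hne, isCompBipartite_sdiff hM₁ hM₂ (ne_of_apply_ne f hne) ?_⟩
  exact fun x hx y hy => adj_of_ncard_inter_maximal hM₁ hM₂ hne
    (fun N₁ N₂ h₁ h₂ h => hmax (N₁, N₂) ⟨h₁, h₂, h⟩) hx hy

end

theorem not_wWellCovered_iff (G : SimpleGraph V) (w : V → ℝ) :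
    ¬ WWellCovered G w ↔
      ∃ S₁ S₂ : Set V, IsMaxIndep G S₁ ∧ IsMaxIndep G S₂ ∧ wt w S₁ ≠ wt w S₂ ∧
        ∃ X Y : Set V, X ∪ Y = symmDiff S₁ S₂ ∧ IsCompBipartite G X Y := by
  constructor
  · intro h
    simp only [WWellCovered, not_forall] at h
    obtain ⟨S, T, hS, hT, hST⟩ := h
    obtain ⟨M₁, M₂, hM₁, hM₂, hne, hbip⟩ := exists_isCompBipartite_sdiff_of_ne hS hT hST
    exact ⟨M₁, M₂, hM₁, hM₂, hne, M₁ \ M₂, M₂ \ M₁, (symmDiff_def M₁ M₂).symm, hbip⟩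
  · rintro ⟨S₁, S₂, hS₁, hS₂, hne, -⟩ hwc
    exact hne (hwc S₁ S₂ hS₁ hS₂)
end

section
/- Let G be a graph containing neither C₄ nor C₆ as subgraphs, let x be a vertex, and let y₁, y₂ be distinct neighbors of x. Then N_2(y₁) ∩ N_2(y₂) ∩ N_3(x) = ∅. -/
open SimpleGraph Set

variable {V : Type*} [Fintype V] [DecidableEq V]

set_option linter.unusedSectionVars false in
lemma hasCycle4 (G : SimpleGraph V) {a b c d : V} (hab : a≠b) (hac : a≠c) (had : a≠d)
    (hbc : b≠c) (hbd : b≠d) (hcd : c≠d)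
    (e1 : G.Adj a b) (e2 : G.Adj b c) (e3 : G.Adj c d) (e4 : G.Adj d a) : HasCycle G 4 := by
  refine ⟨![a,b,c,d], ?_, ?_⟩
  · have : Function.Injective (![a,b,c,d] : Fin 4 → V) := by
      rw [← List.nodup_ofFn]
      simp [hab, hac, had, hbc, hbd, hcd]
    exact this
  · intro i
    have : ∀ j : Fin 4, G.Adj (![a,b,c,d] j) (![a,b,c,d] (j+1)) := by
      intro j
      fin_cases j
      · exact e1
      · exact e2
      · exact e3
      · exact e4
    exact this i

set_option linter.unusedSectionVars false in
lemma hasCycle6 (G : SimpleGraph V) {a b c d e f : V}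
    (h1 : a≠b) (h2 : a≠c) (h3 : a≠d) (h4 : a≠e) (h5 : a≠f)
    (h6 : b≠c) (h7 : b≠d) (h8 : b≠e) (h9 : b≠f)
    (h10 : c≠d) (h11 : c≠e) (h12 : c≠f) (h13 : d≠e) (h14 : d≠f) (h15 : e≠f)
    (e1 : G.Adj a b) (e2 : G.Adj b c) (e3 : G.Adj c d) (e4 : G.Adj d e) (e5 : G.Adj e f)
    (e6 : G.Adj f a) : HasCycle G 6 := by
  refine ⟨![a,b,c,d,e,f], ?_, ?_⟩
  · have : Function.Injective (![a,b,c,d,e,f] : Fin 6 → V) := by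
      rw [← List.nodup_ofFn]
      simp [h1,h2,h3,h4,h5,h6,h7,h8,h9,h10,h11,h12,h13,h14,h15]
    exact this
  · intro i
    have : ∀ j : Fin 6, G.Adj (![a,b,c,d,e,f] j) (![a,b,c,d,e,f] (j+1)) := by
      intro j
      fin_cases j
      · exact e1
      · exact e2
      · exact e3
      · exact e4
      · exact e5
      · exact e6
    exact this i

theorem dist2_inter_empty_of_noC4C6 (G : SimpleGraph V) (h4 : ¬ HasCycle G 4)
    (h6 : ¬ HasCycle G 6) (x y₁ y₂ : V) (h1 : G.Adj x y₁) (h2 : G.Adj x y₂)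
    (hne : y₁ ≠ y₂) : Nv G 2 y₁ ∩ Nv G 2 y₂ ∩ Nv G 3 x = ∅ := by
  ext u
  simp only [Nv, mem_inter_iff, mem_setOf_eq, mem_empty_iff_false, iff_false, not_and]
  rintro ⟨hd1, hd2⟩ hd3
  obtain ⟨p1, hp1⟩ := G.exists_walk_of_edist_eq_coe hd1
  obtain ⟨p2, hp2⟩ := G.exists_walk_of_edist_eq_coe hd2
  set w₁ := p1.getVert 1 with hw1
  set w₂ := p2.getVert 1 with hw2
  have a1 : G.Adj y₁ w₁ := by simpa using p1.adj_getVert_succ (i := 0) (by omega)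
  have b1 : G.Adj w₁ u := by
    have := p1.adj_getVert_succ (i := 1) (by omega)
    rwa [show p1.getVert 2 = u by rw [← hp1]; exact p1.getVert_length] at this
  have a2 : G.Adj y₂ w₂ := by simpa using p2.adj_getVert_succ (i := 0) (by omega)
  have b2 : G.Adj w₂ u := by
    have := p2.adj_getVert_succ (i := 1) (by omega)
    rwa [show p2.getVert 2 = u by rw [← hp2]; exact p2.getVert_length] at this
  have key : ∀ a b : V, G.Adj a b → G.edist a b ≤ 1 := fun a b h => by
    simpa using G.edist_le h.toWalk
  have exu : x ≠ u := fun h => by rw [h, SimpleGraph.edist_self] at hd3; simp at hd3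
  have hxw1 : x ≠ w₁ := fun h => by
    have := key x u (h ▸ b1); rw [hd3] at this; simp at this
  have hxw2 : x ≠ w₂ := fun h => by
    have := key x u (h ▸ b2); rw [hd3] at this; simp at this
  have hy1w1 : y₁ ≠ w₁ := fun h => by
    have := key y₁ u (h ▸ b1); rw [hd1] at this; simp at this
  have hy1w2 : y₁ ≠ w₂ := fun h => by
    have := key y₁ u (h ▸ b2); rw [hd1] at this; simp at this
  have hy2w1 : y₂ ≠ w₁ := fun h => by
    have := key y₂ u (h ▸ b1); rw [hd2] at this; simp at this
  have hy2w2 : y₂ ≠ w₂ := fun h => by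
    have := key y₂ u (h ▸ b2); rw [hd2] at this; simp at this
  have huy1 : u ≠ y₁ := fun h => by rw [← h, SimpleGraph.edist_self] at hd1; simp at hd1
  have huy2 : u ≠ y₂ := fun h => by rw [← h, SimpleGraph.edist_self] at hd2; simp at hd2
  have hxy1 : x ≠ y₁ := h1.ne
  have hxy2 : x ≠ y₂ := h2.ne
  clear_value w₁ w₂
  by_cases hw : w₁ = w₂
  · exact h4 (hasCycle4 G hxy1 hxw1 hxy2 hy1w1 hne hy2w1.symm h1 a1 (hw ▸ a2.symm) h2.symm)
  · exact h6 (hasCycle6 G hxy1 hxw1 exu hxw2 hxy2 hy1w1 huy1.symm hy1w2 hne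
      b1.ne hw hy2w1.symm b2.ne.symm huy2 hy2w2.symm h1 a1 b1 b2.symm a2.symm h2.symm)
end

section
/- Let G be a graph containing neither C₄, C₆, nor C₇ as subgraphs, let x be a vertex, and let y₁, y₂ be distinct neighbors of x. Then there are no edges between N_2(y₁) ∩ N_3(x) and N_2(y₂) ∩ N_3(x). -/
open SimpleGraph Set

variable {V : Type*} [Fintype V] [DecidableEq V]

namespace SimpleGraph

variable {V : Type*} {G : SimpleGraph V}

lemma exists_adj_adj_of_edist_eq_two {u v : V} (h : G.edist u v = 2) :
    ∃ w, G.Adj u w ∧ G.Adj w v := by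
  obtain ⟨-, -, w, hw⟩ := edist_eq_two_iff.mp h
  exact ⟨w, hw.1, hw.2.symm⟩

lemma edist_le_edist_add_one_of_adj {x u v : V} (h : G.Adj u v) :
    G.edist x v ≤ G.edist x u + 1 :=
  G.edist_triangle.trans_eq (by rw [edist_eq_one_iff_adj.mpr h])

lemma edist_eq_two_of_adj_of_edist_eq_three {x y p a : V} (hxy : G.Adj x y) (hyp : G.Adj y p)
    (hpa : G.Adj p a) (ha : G.edist x a = 3) : G.edist x p = 2 := by
  have hle : G.edist x p ≤ 2 := by
    simpa [edist_eq_one_iff_adj.mpr hxy, one_add_one_eq_two] using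
      edist_le_edist_add_one_of_adj (x := x) hyp
  have hge : 3 ≤ G.edist x p + 1 := ha ▸ edist_le_edist_add_one_of_adj hpa
  lift G.edist x p to ℕ using ne_top_of_le_ne_top (by decide) hle with n
  norm_cast at hle hge ⊢
  omega

end SimpleGraph

open SimpleGraph

lemma hasCycle_four {V : Type*} {G : SimpleGraph V} {u v w₁ w₂ : V} (huv : u ≠ v) (hw : w₁ ≠ w₂)
    (hu₁ : G.Adj u w₁) (hu₂ : G.Adj u w₂) (hv₁ : G.Adj v w₁) (hv₂ : G.Adj v w₂) :
    HasCycle G 4 := by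
  refine ⟨![u, w₁, v, w₂], fun i j hij => ?_, fun i => ?_⟩
  · fin_cases i <;> fin_cases j <;> first | rfl | simp_all [hu₁.ne, hv₁.ne, hu₂.ne', hv₂.ne']
  · fin_cases i
    exacts [hu₁, hv₁.symm, hv₂, hu₂.symm]

/-- Two vertices of the closed walk `x y₁ p a b q y₂` can only coincide if they lie at the same
distance from `x`, and the three such pairs are distinct by hypothesis. -/
lemma hasCycle_seven_of_layers {V : Type*} {G : SimpleGraph V} {x y₁ y₂ p q a b : V}
    (h₁ : G.Adj x y₁) (hy₁p : G.Adj y₁ p) (hpa : G.Adj p a) (hab : G.Adj a b) (hqb : G.Adj q b)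
    (hy₂q : G.Adj y₂ q) (h₂ : G.Adj x y₂) (hp : G.edist x p = 2) (hq : G.edist x q = 2)
    (ha : G.edist x a = 3) (hb : G.edist x b = 3) (hy : y₁ ≠ y₂) (hpq : p ≠ q) :
    HasCycle G 7 := by
  set c : ZMod 7 → V := ![x, y₁, p, a, b, q, y₂]
  have hlayer : ∀ i, G.edist x (c i) = ![0, 1, 2, 3, 3, 2, 1] i := by
    intro i
    fin_cases i <;>
      simp [c, hp, hq, ha, hb, edist_eq_one_iff_adj.mpr h₁, edist_eq_one_iff_adj.mpr h₂]
  refine ⟨c, fun i j hij => ?_, fun i => ?_⟩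
  · have hlayer_eq := (hlayer i).symm.trans (hij ▸ hlayer j)
    fin_cases i <;> fin_cases j <;> first | rfl | simp_all [c, hab.ne]
  · fin_cases i
    exacts [h₁, hy₁p, hpa, hab, hqb.symm, hy₂q.symm, h₂.symm]

theorem no_edges_between_of_noC4C6C7_general (G : SimpleGraph V) (h4 : ¬ HasCycle G 4)
    (h7 : ¬ HasCycle G 7) (x y₁ y₂ : V)
    (h1 : G.Adj x y₁) (h2 : G.Adj x y₂) (hne : y₁ ≠ y₂) :
    ∀ a ∈ Nv G 2 y₁ ∩ Nv G 3 x, ∀ b ∈ Nv G 2 y₂ ∩ Nv G 3 x, ¬ G.Adj a b := by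
  rintro a ⟨ha₁, ha⟩ b ⟨hb₂, hb⟩ hab
  obtain ⟨p, hy₁p, hpa⟩ := exists_adj_adj_of_edist_eq_two ha₁
  obtain ⟨q, hy₂q, hqb⟩ := exists_adj_adj_of_edist_eq_two hb₂
  have hp : G.edist x p = 2 := edist_eq_two_of_adj_of_edist_eq_three h1 hy₁p hpa ha
  have hq : G.edist x q = 2 := edist_eq_two_of_adj_of_edist_eq_three h2 hy₂q hqb hb
  by_cases hpq : p = q
  · subst hpq
    have hxp : x ≠ p := fun h => by simp [h] at hp
    exact h4 (hasCycle_four hxp hne h1 h2 hy₁p.symm hy₂q.symm)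
  · exact h7 (hasCycle_seven_of_layers h1 hy₁p hpa hab hqb hy₂q h2 hp hq ha hb hne hpq)

theorem no_edges_between_of_noC4C6C7 (G : SimpleGraph V) (h4 : ¬ HasCycle G 4)
    (h6 : ¬ HasCycle G 6) (h7 : ¬ HasCycle G 7) (x y₁ y₂ : V)
    (h1 : G.Adj x y₁) (h2 : G.Adj x y₂) (hne : y₁ ≠ y₂) :
    ∀ a ∈ Nv G 2 y₁ ∩ Nv G 3 x, ∀ b ∈ Nv G 2 y₂ ∩ Nv G 3 x, ¬ G.Adj a b :=
  no_edges_between_of_noC4C6C7_general G h4 h7 x y₁ y₂ h1 h2 hne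
end

section
/- Let G be a graph containing neither C₄, C₆, nor C₇ as subgraphs, and let x be a vertex. Then every connected component of the subgraph induced on N_3(x) contains at most one edge, i.e., the induced subgraph on N_3(x) contains no path on three vertices. -/
open SimpleGraph Set

variable {V : Type*} [Fintype V] [DecidableEq V]

private lemma extract3' (G : SimpleGraph V) {x v : V} (h : G.edist x v = (3:ℕ)) :
    ∃ a b, G.Adj x a ∧ G.Adj a b ∧ G.Adj b v ∧ G.edist x a = 1 ∧ G.edist x b = 2 := by
  obtain ⟨p, hp⟩ := exists_walk_of_edist_eq_coe h
  match p, hp with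
  | .cons (v := a) h1 (.cons (v := b) h2 (.cons h3 .nil)), _ =>
    refine ⟨a, b, h1, h2, h3, (edist_eq_one_iff_adj).mpr h1, ?_⟩
    have hub : G.edist x b ≤ 2 := by
      have := edist_le ((Walk.cons h1 (Walk.cons h2 .nil)) : G.Walk x b)
      simpa using this
    have htri : G.edist x v ≤ G.edist x b + G.edist b v := SimpleGraph.edist_triangle
    rw [h, edist_eq_one_iff_adj.mpr h3] at htri
    have hne : G.edist x b ≠ ⊤ := ne_top_of_le_ne_top (by decide) hub
    lift G.edist x b to ℕ using hne with n hn
    norm_cast at htri hub ⊢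
    omega

private lemma ne_of_level' (G : SimpleGraph V) {x u w : V} {m n : ℕ∞}
    (hu : G.edist x u = m) (hw : G.edist x w = n) (h : m ≠ n) : u ≠ w := by
  rintro rfl; rw [hu] at hw; exact h hw

set_option maxHeartbeats 2000000 in
theorem no_path3_in_N3x_of_noC4C6C7 (G : SimpleGraph V) (h4 : ¬ HasCycle G 4)
    (h6 : ¬ HasCycle G 6) (h7 : ¬ HasCycle G 7) (x : V) :
    ∀ v₁ ∈ Nv G 3 x, ∀ v₂ ∈ Nv G 3 x, ∀ v₃ ∈ Nv G 3 x,
      v₁ ≠ v₃ → G.Adj v₁ v₂ → G.Adj v₂ v₃ → False := by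
  intro v₁ hv₁ v₂ hv₂ v₃ hv₃ h13 h12 h23
  simp only [Nv, Set.mem_setOf_eq] at hv₁ hv₂ hv₃
  obtain ⟨a₁, b₁, xa₁, ab₁, bv₁, ea₁, eb₁⟩ := extract3' G hv₁
  obtain ⟨a₃, b₃, xa₃, ab₃, bv₃, ea₃, eb₃⟩ := extract3' G hv₃
  have ex : G.edist x x = 0 := edist_eq_zero_iff.mpr rfl
  -- cross-level distinctness
  have nxa₁ : x ≠ a₁ := ne_of_level' G ex ea₁ (by decide)
  have nxa₃ : x ≠ a₃ := ne_of_level' G ex ea₃ (by decide)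
  have nxb₁ : x ≠ b₁ := ne_of_level' G ex eb₁ (by decide)
  have nxb₃ : x ≠ b₃ := ne_of_level' G ex eb₃ (by decide)
  have nxv₁ : x ≠ v₁ := ne_of_level' G ex hv₁ (by decide)
  have nxv₂ : x ≠ v₂ := ne_of_level' G ex hv₂ (by decide)
  have nxv₃ : x ≠ v₃ := ne_of_level' G ex hv₃ (by decide)
  have na₁b₁ : a₁ ≠ b₁ := ne_of_level' G ea₁ eb₁ (by decide)
  have na₁b₃ : a₁ ≠ b₃ := ne_of_level' G ea₁ eb₃ (by decide)
  have na₃b₁ : a₃ ≠ b₁ := ne_of_level' G ea₃ eb₁ (by decide)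
  have na₃b₃ : a₃ ≠ b₃ := ne_of_level' G ea₃ eb₃ (by decide)
  have na₁v₁ : a₁ ≠ v₁ := ne_of_level' G ea₁ hv₁ (by decide)
  have na₁v₂ : a₁ ≠ v₂ := ne_of_level' G ea₁ hv₂ (by decide)
  have na₁v₃ : a₁ ≠ v₃ := ne_of_level' G ea₁ hv₃ (by decide)
  have na₃v₁ : a₃ ≠ v₁ := ne_of_level' G ea₃ hv₁ (by decide)
  have na₃v₂ : a₃ ≠ v₂ := ne_of_level' G ea₃ hv₂ (by decide)
  have na₃v₃ : a₃ ≠ v₃ := ne_of_level' G ea₃ hv₃ (by decide)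
  have nb₁v₁ : b₁ ≠ v₁ := ne_of_level' G eb₁ hv₁ (by decide)
  have nb₁v₂ : b₁ ≠ v₂ := ne_of_level' G eb₁ hv₂ (by decide)
  have nb₁v₃ : b₁ ≠ v₃ := ne_of_level' G eb₁ hv₃ (by decide)
  have nb₃v₁ : b₃ ≠ v₁ := ne_of_level' G eb₃ hv₁ (by decide)
  have nb₃v₂ : b₃ ≠ v₂ := ne_of_level' G eb₃ hv₂ (by decide)
  have nb₃v₃ : b₃ ≠ v₃ := ne_of_level' G eb₃ hv₃ (by decide)
  have n12 : v₁ ≠ v₂ := h12.ne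
  have n23 : v₂ ≠ v₃ := h23.ne
  by_cases hbb : b₁ = b₃
  · subst hbb
    refine h4 ⟨![b₁, v₁, v₂, v₃], ?_, ?_⟩
    · have hnd : (List.ofFn ((![b₁, v₁, v₂, v₃]) : Fin 4 → V)).Nodup := by
        simp [List.ofFn_succ]
        tauto
      exact List.nodup_ofFn.mp hnd
    · intro i; fin_cases i
      · exact bv₁
      · exact h12
      · exact h23
      · exact bv₃.symm
  by_cases haa : a₁ = a₃
  · subst haa
    refine h6 ⟨![a₁, b₁, v₁, v₂, v₃, b₃], ?_, ?_⟩
    · have hnd : (List.ofFn ((![a₁, b₁, v₁, v₂, v₃, b₃]) : Fin 6 → V)).Nodup := by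
        simp [List.ofFn_succ]
        tauto
      exact List.nodup_ofFn.mp hnd
    · intro i; fin_cases i
      · exact ab₁
      · exact bv₁
      · exact h12
      · exact h23
      · exact bv₃.symm
      · exact ab₃.symm
  obtain ⟨a₂, b₂, xa₂, ab₂, bv₂, ea₂, eb₂⟩ := extract3' G hv₂
  have nxa₂ : x ≠ a₂ := ne_of_level' G ex ea₂ (by decide)
  have nxb₂ : x ≠ b₂ := ne_of_level' G ex eb₂ (by decide)
  have na₂b₁ : a₂ ≠ b₁ := ne_of_level' G ea₂ eb₁ (by decide)
  have na₂b₂ : a₂ ≠ b₂ := ne_of_level' G ea₂ eb₂ (by decide)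
  have na₂b₃ : a₂ ≠ b₃ := ne_of_level' G ea₂ eb₃ (by decide)
  have na₁b₂ : a₁ ≠ b₂ := ne_of_level' G ea₁ eb₂ (by decide)
  have na₃b₂ : a₃ ≠ b₂ := ne_of_level' G ea₃ eb₂ (by decide)
  have na₂v₁ : a₂ ≠ v₁ := ne_of_level' G ea₂ hv₁ (by decide)
  have na₂v₂ : a₂ ≠ v₂ := ne_of_level' G ea₂ hv₂ (by decide)
  have na₂v₃ : a₂ ≠ v₃ := ne_of_level' G ea₂ hv₃ (by decide)
  have nb₂v₁ : b₂ ≠ v₁ := ne_of_level' G eb₂ hv₁ (by decide)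
  have nb₂v₂ : b₂ ≠ v₂ := ne_of_level' G eb₂ hv₂ (by decide)
  have nb₂v₃ : b₂ ≠ v₃ := ne_of_level' G eb₂ hv₃ (by decide)
  by_cases h21 : b₂ = b₁
  · subst h21
    refine h7 ⟨![x, a₁, b₂, v₂, v₃, b₃, a₃], ?_, ?_⟩
    · have hnd : (List.ofFn ((![x, a₁, b₂, v₂, v₃, b₃, a₃]) : Fin 7 → V)).Nodup := by
        simp [List.ofFn_succ]
        tauto
      exact List.nodup_ofFn.mp hnd
    · intro i; fin_cases i
      · exact xa₁
      · exact ab₁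
      · exact bv₂
      · exact h23
      · exact bv₃.symm
      · exact ab₃.symm
      · exact xa₃.symm
  by_cases h23b : b₂ = b₃
  · subst h23b
    refine h7 ⟨![x, a₃, b₂, v₂, v₁, b₁, a₁], ?_, ?_⟩
    · have hnd : (List.ofFn ((![x, a₃, b₂, v₂, v₁, b₁, a₁]) : Fin 7 → V)).Nodup := by
        simp [List.ofFn_succ]
        tauto
      exact List.nodup_ofFn.mp hnd
    · intro i; fin_cases i
      · exact xa₃
      · exact ab₃
      · exact bv₂
      · exact h12.symm
      · exact bv₁.symm
      · exact ab₁.symm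
      · exact xa₁.symm
  by_cases h2a1 : a₂ = a₁
  · have h2a3 : a₂ ≠ a₃ := by rw [h2a1]; exact haa
    refine h7 ⟨![x, a₂, b₂, v₂, v₃, b₃, a₃], ?_, ?_⟩
    · have hnd : (List.ofFn ((![x, a₂, b₂, v₂, v₃, b₃, a₃]) : Fin 7 → V)).Nodup := by
        simp [List.ofFn_succ]
        tauto
      exact List.nodup_ofFn.mp hnd
    · intro i; fin_cases i
      · exact xa₂
      · exact ab₂
      · exact bv₂
      · exact h23
      · exact bv₃.symm
      · exact ab₃.symm
      · exact xa₃.symm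
  · refine h7 ⟨![x, a₂, b₂, v₂, v₁, b₁, a₁], ?_, ?_⟩
    · have hnd : (List.ofFn ((![x, a₂, b₂, v₂, v₁, b₁, a₁]) : Fin 7 → V)).Nodup := by
        simp [List.ofFn_succ]
        tauto
      exact List.nodup_ofFn.mp hnd
    · intro i; fin_cases i
      · exact xa₂
      · exact ab₂
      · exact bv₂
      · exact h12.symm
      · exact bv₁.symm
      · exact ab₁.symm
      · exact xa₁.symm
end

section
/- Let G be a graph containing neither C₄ nor C₆ as subgraphs, and let x be a vertex. Then every vertex of N_3(x) is adjacent to exactly one vertex of N_2(x). -/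
open SimpleGraph Set

variable {V : Type*} [Fintype V] [DecidableEq V]

/-! Two distinct neighbours `u, u'` of `v ∈ N₃(x)` in `N₂(x)` have neighbours `a, a'` in `N₁(x)`.
If `a = a'`, then `a u v u'` is a 4-cycle; otherwise `x a u v u' a'` is a 6-cycle. Every
distinctness needed for these cycles holds because the vertices lie on different distance levels
from `x`. -/

section

variable {W : Type*} {G : SimpleGraph W}

lemma SimpleGraph.exists_adj_edist_eq_of_edist_eq_add_one {x v : W} {n : ℕ}
    (h : G.edist x v = n + 1) : ∃ u, G.Adj u v ∧ G.edist x u = n := by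
  obtain ⟨p, hp⟩ := G.exists_walk_of_edist_eq_coe (k := n + 1) (by rw [h]; push_cast; rfl)
  have hadj : G.Adj (p.getVert n) v := by
    have := p.adj_getVert_succ (i := n) (by omega)
    rwa [← hp, p.getVert_length] at this
  refine ⟨p.getVert n, hadj, le_antisymm ?_ ?_⟩
  · simpa [hp] using G.edist_le (p.take n)
  · have : (n : ℕ∞) + 1 ≤ G.edist x (p.getVert n) + 1 :=
      calc (n : ℕ∞) + 1 = G.edist x v := h.symm
        _ ≤ G.edist x (p.getVert n) + G.edist (p.getVert n) v := G.edist_triangle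
        _ = G.edist x (p.getVert n) + 1 := by rw [edist_eq_one_iff_adj.mpr hadj]
    exact (ENat.add_le_add_iff_right ENat.one_ne_top).mp this

lemma exists_adj_mem_Nv_of_mem_Nv_add_one {x v : W} {n : ℕ} (hv : v ∈ Nv G (n + 1) x) :
    ∃ u ∈ Nv G n x, G.Adj u v := by
  obtain ⟨u, huv, hu⟩ :=
    G.exists_adj_edist_eq_of_edist_eq_add_one (n := n) (by simpa [Nv] using hv)
  exact ⟨u, hu, huv⟩

lemma self_mem_Nv_zero (x : W) : x ∈ Nv G 0 x := by
  simp [Nv]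

lemma mem_Nv_one {x u : W} : u ∈ Nv G 1 x ↔ G.Adj x u := by
  simp [Nv, edist_eq_one_iff_adj]

lemma ne_of_mem_Nv {x p q : W} {i j : ℕ} (hp : p ∈ Nv G i x) (hq : q ∈ Nv G j x)
    (hij : i ≠ j) : p ≠ q := by
  rintro rfl
  exact hij (Nat.cast_injective (hp.symm.trans hq))

lemma hasCycle_four_s12 {a b c d : W} (hab : G.Adj a b) (hbc : G.Adj b c) (hcd : G.Adj c d)
    (hda : G.Adj d a) (hac : a ≠ c) (hbd : b ≠ d) : HasCycle G 4 := by
  refine ⟨![a, b, c, d], ?_, fun i => ?_⟩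
  · change Function.Injective (![a, b, c, d] : Fin 4 → W)
    rw [← List.nodup_ofFn]
    simp [List.ofFn_succ, hab.ne, hbc.ne, hcd.ne, hda.ne.symm, hac, hbd]
  · fin_cases i
    exacts [hab, hbc, hcd, hda]

lemma hasCycle_six {a b c d e f : W} (hab : G.Adj a b) (hbc : G.Adj b c) (hcd : G.Adj c d)
    (hde : G.Adj d e) (hef : G.Adj e f) (hfa : G.Adj f a) (hac : a ≠ c) (had : a ≠ d)
    (hae : a ≠ e) (hbd : b ≠ d) (hbe : b ≠ e) (hbf : b ≠ f) (hce : c ≠ e) (hcf : c ≠ f)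
    (hdf : d ≠ f) : HasCycle G 6 := by
  refine ⟨![a, b, c, d, e, f], ?_, fun i => ?_⟩
  · change Function.Injective (![a, b, c, d, e, f] : Fin 6 → W)
    rw [← List.nodup_ofFn]
    simp [List.ofFn_succ, hab.ne, hbc.ne, hcd.ne, hde.ne, hef.ne, hfa.ne.symm, hac, had, hae,
      hbd, hbe, hbf, hce, hcf, hdf]
  · fin_cases i
    exacts [hab, hbc, hcd, hde, hef, hfa]

lemma eq_of_adj_of_mem_Nv_two (h4 : ¬ HasCycle G 4) (h6 : ¬ HasCycle G 6) {x v u u' : W}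
    (hv : v ∈ Nv G 3 x) (hu : u ∈ Nv G 2 x) (hu' : u' ∈ Nv G 2 x) (huv : G.Adj u v)
    (hu'v : G.Adj u' v) : u = u' := by
  by_contra hne
  obtain ⟨a, ha, hau⟩ := exists_adj_mem_Nv_of_mem_Nv_add_one (n := 1) hu
  obtain ⟨a', ha', ha'u'⟩ := exists_adj_mem_Nv_of_mem_Nv_add_one (n := 1) hu'
  rcases eq_or_ne a a' with rfl | haa'
  · exact h4 (hasCycle_four_s12 hau huv hu'v.symm ha'u'.symm (ne_of_mem_Nv ha hv (by decide)) hne)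
  · have hx := self_mem_Nv_zero (G := G) x
    exact h6 (hasCycle_six (mem_Nv_one.mp ha) hau huv hu'v.symm ha'u'.symm
      (mem_Nv_one.mp ha').symm (ne_of_mem_Nv hx hu (by decide)) (ne_of_mem_Nv hx hv (by decide))
      (ne_of_mem_Nv hx hu' (by decide)) (ne_of_mem_Nv ha hv (by decide))
      (ne_of_mem_Nv ha hu' (by decide)) haa' hne (ne_of_mem_Nv hu ha' (by decide))
      (ne_of_mem_Nv hv ha' (by decide)))

end

theorem unique_neighbor_in_N2_of_noC4C6 (G : SimpleGraph V) (h4 : ¬ HasCycle G 4)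
    (h6 : ¬ HasCycle G 6) (x : V) :
    ∀ v ∈ Nv G 3 x, ∃! u : V, u ∈ Nv G 2 x ∧ G.Adj u v := by
  intro v hv
  obtain ⟨u, hu, huv⟩ := exists_adj_mem_Nv_of_mem_Nv_add_one (n := 2) hv
  exact ⟨u, ⟨hu, huv⟩, fun u' ⟨hu', hu'v⟩ => eq_of_adj_of_mem_Nv_two h4 h6 hv hu' hu hu'v huv⟩
end

section
/- Let G be a graph with weight function w, and suppose G has no generating subgraph at all. Then G is w-well-covered for every weight function w; in particular, G has a unique maximal independent set or all maximal independent sets coincide in weight for all w only if every two maximal independent sets are equal. -/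
open SimpleGraph Set

variable {V : Type*} [Fintype V] [DecidableEq V]

/-!
If `S ≠ T` are maximal independent sets with `|S ∩ T|` as large as possible, then every
`x ∈ S \ T` is adjacent to every `y ∈ T \ S`: otherwise trading the neighbours of `y` in `S` for
`y` and extending to a maximal independent set gives one other than `T` (it contains `x`) that
meets `T` in `S ∩ T` and `y`. So `(S \ T, T \ S)` is generating, with witness `S ∩ T`. Hence a
graph without generating subgraphs has a unique maximal independent set, which makes it
`w`-well-covered for every `w`.
-/

section

omit [Fintype V] [DecidableEq V]

namespace IsIndep

variable {G : SimpleGraph V} {S : Set V}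

lemma insert_diff_neighborSet (hS : IsIndep G S) (y : V) :
    IsIndep G (insert y (S \ G.neighborSet y)) :=
  Set.Pairwise.insert (hS.mono sdiff_subset) fun _ hb _ => ⟨hb.2, fun h => hb.2 h.symm⟩

lemma exists_isMaxIndep_superset_s15 [Finite V] (hS : IsIndep G S) :
    ∃ M, IsMaxIndep G M ∧ S ⊆ M := by
  obtain ⟨M, ⟨hM, hSM⟩, hmax⟩ :=
    exists_max_image {T | IsIndep G T ∧ S ⊆ T} ncard (toFinite _) ⟨S, hS, subset_rfl⟩
  refine ⟨M, ⟨hM, fun T hT hMT => ?_⟩, hSM⟩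
  exact (eq_of_subset_of_ncard_le hMT (hmax T ⟨hT, hSM.trans hMT⟩) (toFinite _)).symm

end IsIndep

namespace IsMaxIndep

variable {G : SimpleGraph V} {S T : Set V}

lemma diff_nonempty (hS : IsMaxIndep G S) (hT : IsIndep G T) (hST : S ≠ T) :
    (S \ T).Nonempty :=
  Set.sdiff_nonempty.2 fun hsub => hST (hS.2 T hT hsub).symm

lemma exists_ncard_inter_lt [Finite V] (hS : IsMaxIndep G S) (hT : IsIndep G T) {x y : V}
    (hx : x ∈ S \ T) (hy : y ∈ T \ S) (hxy : ¬ G.Adj x y) :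
    ∃ M, IsMaxIndep G M ∧ M ≠ T ∧ (S ∩ T).ncard < (M ∩ T).ncard := by
  obtain ⟨M, hM, hIM⟩ := (hS.1.insert_diff_neighborSet y).exists_isMaxIndep_superset_s15
  have hxM : x ∈ M := hIM (Or.inr ⟨hx.1, fun h => hxy h.symm⟩)
  have hsub : insert y (S ∩ T) ⊆ M ∩ T := by
    rintro r (rfl | ⟨hrS, hrT⟩)
    · exact ⟨hIM (mem_insert r _), hy.1⟩
    · have hyr : y ≠ r := fun h => hy.2 (h ▸ hrS)
      exact ⟨hIM (Or.inr ⟨hrS, hT hy.1 hrT hyr⟩), hrT⟩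
  refine ⟨M, hM, fun h => hx.2 (h ▸ hxM), ?_⟩
  calc (S ∩ T).ncard < (insert y (S ∩ T)).ncard :=
        ncard_lt_ncard (ssubset_insert fun h => hy.2 h.1) (toFinite _)
    _ ≤ (M ∩ T).ncard := ncard_le_ncard hsub (toFinite _)

lemma generating_diff_diff (hS : IsMaxIndep G S) (hT : IsMaxIndep G T) (hST : S ≠ T)
    (hadj : ∀ x ∈ S \ T, ∀ y ∈ T \ S, G.Adj x y) : Generating G (S \ T) (T \ S) := by
  refine ⟨⟨hS.diff_nonempty hT.1 hST, hT.diff_nonempty hS.1 hST.symm,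
    disjoint_sdiff_left.mono_right sdiff_subset, hS.1.mono sdiff_subset, hT.1.mono sdiff_subset,
    hadj⟩, S ∩ T, hS.1.mono inter_subset_left, ?_, ?_, ?_⟩
  · exact disjoint_union_right.2
      ⟨disjoint_sdiff_right.mono_left inter_subset_right,
        disjoint_sdiff_right.mono_left inter_subset_left⟩
  · rwa [inter_union_sdiff]
  · rwa [inter_comm, inter_union_sdiff]

theorem eq_of_not_generating [Finite V] (h : ¬ ∃ X Y : Set V, Generating G X Y)
    (hS : IsMaxIndep G S) (hT : IsMaxIndep G T) : S = T := by
  by_contra hne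
  obtain ⟨S', ⟨hS', hS'T⟩, hmax⟩ :=
    exists_max_image {M | IsMaxIndep G M ∧ M ≠ T} (fun M => (M ∩ T).ncard) (toFinite _)
      ⟨S, hS, hne⟩
  refine h ⟨_, _, hS'.generating_diff_diff hT hS'T fun x hx y hy => ?_⟩
  by_contra hxy
  obtain ⟨M, hM, hMT, hlt⟩ := hS'.exists_ncard_inter_lt hT.1 hx hy hxy
  exact (hmax M ⟨hM, hMT⟩).not_gt hlt

end IsMaxIndep

end

theorem no_generating_subgraph (G : SimpleGraph V)
    (h : ¬ ∃ X Y : Set V, Generating G X Y) :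
    (∀ w : V → ℝ, WWellCovered G w) ∧
    ∀ S T : Set V, IsMaxIndep G S → IsMaxIndep G T → S = T := by
  have huniq : ∀ S T : Set V, IsMaxIndep G S → IsMaxIndep G T → S = T :=
    fun _ _ hS hT => IsMaxIndep.eq_of_not_generating h hS hT
  exact ⟨fun w S T hS hT => by rw [huniq S T hS hT], huniq⟩
end
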